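/- Let q ≥ 3 be a prime power, m ≥ 1, n = q^m, and let C be the difference-matrix code of length n over 𝔽_q, namely C = {x ∈ 𝔽_q^{𝔽_q^m} : Σ_{v ∈ 𝔽_q^m} x_v = 0 and Σ_{v ∈ 𝔽_q^m} x_v·v = 0 ∈ 𝔽_q^m}, with coordinates indexed by the vectors v ∈ 𝔽_q^m. Then C is a linear [n, n−m−1, 3]_q code, it is completely regular with covering radius 2, its dual C⊥ is antipodal, and its intersection array is (n(q−1), n−1; 1, n(q−1)). -/

import Mathlib

/-!
The code is the kernel of the syndrome map `x ↦ (∑ᵥ xᵥ, ∑ᵥ xᵥ • v)` onto `𝔽_q × 𝔽_q^m`. A syndrome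
`(σ, τ)` with `σ ≠ 0` is that of the single vector `σ e_{σ⁻¹τ}`, and one of the form `(0, τ)` with
`τ ≠ 0` is that of `e_τ - e_0` but of no vector of weight `≤ 1`; so the distance of `x` to the code
is `0`, `1` or `2` according to its syndrome. Since a vector of weight `≤ 1` is determined by its
syndrome, no nonzero codeword has weight `≤ 2`, while `e_{λt} - λ e_t - (1 - λ) e_0` with
`λ ∉ {0, 1}` is a codeword of weight `3`. Moving from `x` to a neighbour `x + a e_v` adds `(a, a v)`
to the syndrome, and counting the pairs `(v, a)` that land in each of the three classes gives
intersection numbers depending only on the distance of `x`.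
-/

open Finset

variable {F : Type*} [Field F] [Fintype F] [DecidableEq F]

/-- The Hamming distance from a vector to a code. -/
noncomputable def distToCode {ι : Type*} [Fintype ι] (C : Set (ι → F)) (x : ι → F) : ℕ :=
  sInf {d : ℕ | ∃ c ∈ C, hammingDist x c = d}

/-- The covering radius of a code: the maximal distance of a vector to the code. -/
noncomputable def coveringRadius {ι : Type*} [Fintype ι] (C : Set (ι → F)) : ℕ :=
  sSup {d : ℕ | ∃ x : ι → F, distToCode C x = d}

/-- `C` has intersection numbers `b l` (number of neighbours one step further from the code)
and `c l` (number of neighbours one step closer to the code), for every `x` at distance `l`. -/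
def HasIntersectionNumbers {ι : Type*} [Fintype ι] (C : Set (ι → F)) (b c : ℕ → ℕ) : Prop :=
  ∀ l : ℕ, ∀ x : ι → F, distToCode C x = l →
    Nat.card {y : ι → F | hammingDist x y = 1 ∧ distToCode C y = l + 1} = b l ∧
    Nat.card {y : ι → F | hammingDist x y = 1 ∧ distToCode C y + 1 = l} = c l

/-- A code is completely regular if it admits intersection numbers. -/
def IsCompletelyRegular {ι : Type*} [Fintype ι] (C : Set (ι → F)) : Prop :=
  ∃ b c : ℕ → ℕ, HasIntersectionNumbers C b c

/-- The minimum distance of a code. -/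
noncomputable def minDist {ι : Type*} [Fintype ι] (C : Set (ι → F)) : ℕ :=
  sInf {d : ℕ | ∃ x ∈ C, ∃ y ∈ C, x ≠ y ∧ hammingDist x y = d}

/-- A code is equidistant if any two distinct codewords are at the same Hamming distance. -/
def IsEquidistant {ι : Type*} [Fintype ι] (C : Set (ι → F)) : Prop :=
  ∃ d : ℕ, ∀ x ∈ C, ∀ y ∈ C, x ≠ y → hammingDist x y = d

/-- The dual of a code, with respect to the standard bilinear form. -/
def dualSet {ι : Type*} [Fintype ι] (C : Set (ι → F)) : Set (ι → F) :=
  {y | ∀ x ∈ C, ∑ i, x i * y i = 0}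

/-- A code of length `n` is antipodal if it contains a word of Hamming weight `n`. -/
def IsAntipodal {ι : Type*} [Fintype ι] (C : Set (ι → F)) : Prop :=
  ∃ v ∈ C, hammingNorm v = Fintype.card ι

/-- A monomial transformation: a coordinate permutation composed with multiplication of
each coordinate by a nonzero scalar. -/
def IsMonomialMap {ι : Type*} (φ : (ι → F) → (ι → F)) : Prop :=
  ∃ (π : Equiv.Perm ι) (s : ι → Fˣ), ∀ x i, φ x i = (s i : F) * x (π i)

/-- Two codes are monomially equivalent if one is the image of the other under a bijection of
coordinates together with multiplication of each coordinate by a nonzero scalar. -/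
def MonomiallyEquivalent {ι κ : Type*} (C : Set (ι → F)) (D : Set (κ → F)) : Prop :=
  ∃ (e : ι ≃ κ) (s : ι → Fˣ),
    (fun (x : ι → F) (j : κ) => (s (e.symm j) : F) * x (e.symm j)) '' C = D

/-- The orbit, under the action of `Aut C` on the cosets of `C`, of the coset of `v`
(realised as the union of all cosets in the orbit). -/
def cosetOrbit {ι : Type*} (C : Submodule F (ι → F)) (v : ι → F) : Set (ι → F) :=
  {w | ∃ φ : (ι → F) → (ι → F), IsMonomialMap φ ∧
    φ '' (C : Set (ι → F)) = (C : Set (ι → F)) ∧ φ v - w ∈ C}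

/-- The number of orbits of the action of `Aut C` on the cosets of `C`. -/
noncomputable def numCosetOrbits {ι : Type*} (C : Submodule F (ι → F)) : ℕ :=
  Nat.card (Set.range (cosetOrbit C))

/-- `H` is a `q`-ary Hamming code with parameter `m ≥ 2`: a perfect
`[(q^m-1)/(q-1), (q^m-1)/(q-1) - m, 3]_q` code with covering radius 1. -/
def IsHammingCode (m : ℕ) {nm : ℕ} (H : Submodule F (Fin nm → F)) : Prop :=
  2 ≤ m ∧ nm = (Fintype.card F ^ m - 1) / (Fintype.card F - 1) ∧
  Module.finrank F H = nm - m ∧ minDist (H : Set (Fin nm → F)) = 3 ∧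
  coveringRadius (H : Set (Fin nm → F)) = 1

/-- The extended code: append an overall parity-check coordinate. -/
def extendedCode {m : ℕ} (D : Set (Fin m → F)) : Set (Fin (m + 1) → F) :=
  {z | (fun i : Fin m => z i.castSucc) ∈ D ∧ ∑ i, z i = 0}

/-- Construction I(u): append `u` free coordinates to every codeword. -/
def appendCode (u : ℕ) {n : ℕ} (C : Set (Fin n → F)) : Set (Fin (n + u) → F) :=
  {z | ∃ c ∈ C, ∃ y : Fin u → F, z = Fin.append c y}

/-- Construction II(ℓ): codewords are `ℓ`-tuples of blocks whose `λ`-weighted sum lies in `C`. -/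
def repeatCode {n ℓ : ℕ} (lam : Fin ℓ → Fˣ) (C : Set (Fin n → F)) :
    Set (Fin ℓ × Fin n → F) :=
  {z | (fun j : Fin n => ∑ i : Fin ℓ, (lam i : F) * z (i, j)) ∈ C}

/-- The code `{(x₁|⋯|x_ℓ|y) : x₁+⋯+x_ℓ ∈ H, y free}` built from a code `H`. -/
def hammingRepeatCode {nm : ℕ} (ℓ u : ℕ) (H : Set (Fin nm → F)) :
    Set ((Fin ℓ × Fin nm) ⊕ Fin u → F) :=
  {z | (fun j : Fin nm => ∑ i : Fin ℓ, z (Sum.inl (i, j))) ∈ H}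

theorem card_subtype_snd_ne {α β : Type*} [Fintype α] [Fintype β] [DecidableEq β] (b : β) :
    Nat.card {p : α × β // p.2 ≠ b} = Fintype.card α * (Fintype.card β - 1) := by
  refine (Nat.card_congr ((Equiv.subtypeEquivRight fun _ => (true_and _).symm.to_iff).trans
    (Equiv.subtypeProdEquivProd (p := fun _ => True) (q := (· ≠ b))))).trans ?_
  simp [Nat.card_eq_fintype_card, Fintype.card_subtype_compl]

theorem card_subtype_fst_ne_snd_eq {α β : Type*} [Fintype α] [DecidableEq α] (u : α) (b : β) :
    Nat.card {p : α × β // p.1 ≠ u ∧ p.2 = b} = Fintype.card α - 1 := by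
  refine (Nat.card_congr (Equiv.subtypeProdEquivProd (p := (· ≠ u)) (q := (· = b)))).trans ?_
  simp [Nat.card_eq_fintype_card, Fintype.card_subtype_compl]

section Hamming

variable {ι β : Type*} [Fintype ι] [AddGroup β] [DecidableEq β]

theorem hammingDist_eq_hammingNorm_sub (x y : ι → β) : hammingDist x y = hammingNorm (x - y) := by
  simp_rw [hammingNorm, hammingDist, Pi.sub_apply, ne_eq, sub_eq_zero]

theorem hammingNorm_sub_le (x y : ι → β) :
    hammingNorm (x - y) ≤ hammingNorm x + hammingNorm y := by
  simpa [← hammingDist_eq_hammingNorm_sub, hammingDist_comm 0 y] using hammingDist_triangle x 0 y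

variable [DecidableEq ι]

theorem hammingNorm_single {i : ι} {a : β} (ha : a ≠ 0) :
    hammingNorm (Pi.single i a : ι → β) = 1 := by
  rw [hammingNorm, Finset.card_eq_one]
  exact ⟨i, by ext j; by_cases hj : j = i <;> simp [hj, ha]⟩

theorem hammingNorm_sub_single_self_add_one {z : ι → β} {i : ι} (hi : z i ≠ 0) :
    hammingNorm (z - Pi.single i (z i)) + 1 = hammingNorm z := by
  have : ({j | (z - Pi.single i (z i) : ι → β) j ≠ 0} : Finset ι) =
      ({j | z j ≠ 0} : Finset ι).erase i := by
    ext j; by_cases hj : j = i <;> simp [hj]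
  rw [hammingNorm, hammingNorm, this, Finset.card_erase_add_one (by simpa using hi)]

theorem hammingNorm_eq_one_iff {z : ι → β} :
    hammingNorm z = 1 ↔ ∃ i, ∃ a ≠ 0, z = Pi.single i a := by
  refine ⟨fun h => ?_, fun ⟨i, a, ha, hz⟩ => hz ▸ hammingNorm_single ha⟩
  obtain ⟨i, hi⟩ : ∃ i, z i ≠ 0 := by
    by_contra! h0
    rw [show z = 0 from funext h0, hammingNorm_zero] at h
    exact zero_ne_one h
  refine ⟨i, z i, hi, ?_⟩
  have := hammingNorm_sub_single_self_add_one hi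
  rw [← sub_eq_zero, ← hammingNorm_eq_zero]
  omega

theorem hammingNorm_single_le (i : ι) (a : β) : hammingNorm (Pi.single i a : ι → β) ≤ 1 := by
  rcases eq_or_ne a 0 with rfl | ha
  · simp
  · exact (hammingNorm_single ha).le

theorem hammingNorm_le_one_iff [Nonempty ι] {z : ι → β} :
    hammingNorm z ≤ 1 ↔ ∃ i a, z = Pi.single i a := by
  refine ⟨fun h => ?_, fun ⟨i, a, hz⟩ => hz ▸ hammingNorm_single_le i a⟩
  rcases Nat.le_one_iff_eq_zero_or_eq_one.1 h with h | h
  · exact ⟨Classical.arbitrary ι, 0, by rw [Pi.single_zero, ← hammingNorm_eq_zero, h]⟩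
  · obtain ⟨i, a, -, hz⟩ := hammingNorm_eq_one_iff.1 h
    exact ⟨i, a, hz⟩

theorem hammingDist_eq_one_iff {x y : ι → β} :
    hammingDist x y = 1 ↔ ∃ i, ∃ a ≠ 0, y = x + Pi.single i a := by
  simp only [hammingDist_eq_hammingNorm, hammingNorm_eq_one_iff, neg_add_eq_iff_eq_add]

theorem card_neighbours (x : ι → β) (P : (ι → β) → Prop) :
    Nat.card {y | hammingDist x y = 1 ∧ P y} =
      Nat.card {p : ι × β // p.2 ≠ 0 ∧ P (x + Pi.single p.1 p.2)} := by
  refine Nat.card_congr (Equiv.ofBijective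
    (fun p => ⟨x + Pi.single p.1.1 p.1.2, hammingDist_eq_one_iff.2 ⟨_, _, p.2.1, rfl⟩, p.2.2⟩)
    ⟨?_, ?_⟩).symm
  · rintro ⟨⟨i, a⟩, ha, _⟩ ⟨⟨j, b⟩, _, _⟩ hxy
    have hs : (Pi.single i a : ι → β) = Pi.single j b := add_left_cancel (congrArg Subtype.val hxy)
    obtain rfl : i = j := by
      by_contra hij
      simpa [Pi.single_apply, hij, ha] using congrFun hs i
    obtain rfl : a = b := by simpa using congrFun hs i
    rfl
  · rintro ⟨y, hy, hPy⟩
    obtain ⟨i, a, ha, rfl⟩ := hammingDist_eq_one_iff.1 hy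
    exact ⟨⟨(i, a), ha, hPy⟩, rfl⟩

end Hamming

section Codes

variable {ι β : Type*} [Fintype ι] [DecidableEq β] {C : Set (ι → β)}

theorem distToCode_eq_of_forall_le {x : ι → β} {d : ℕ} (hx : ∃ c ∈ C, hammingDist x c ≤ d)
    (hd : ∀ c ∈ C, d ≤ hammingDist x c) : distToCode C x = d := by
  obtain ⟨c, hc, hcd⟩ := hx
  unfold distToCode
  refine le_antisymm ((Nat.sInf_le ?_).trans hcd) (le_csInf ⟨_, c, hc, rfl⟩ ?_)
  · exact ⟨c, hc, rfl⟩
  · rintro _ ⟨c', hc', rfl⟩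
    exact hd c' hc'

theorem coveringRadius_eq_of_forall_le {d : ℕ} (hd : ∀ x, distToCode C x ≤ d)
    (hx : ∃ x, distToCode C x = d) : coveringRadius C = d := by
  refine le_antisymm (csSup_le ⟨d, hx⟩ ?_) (le_csSup ⟨d, ?_⟩ hx)
  all_goals rintro _ ⟨x, rfl⟩; exact hd x

theorem HasIntersectionNumbers.unique {b c b' c' : ℕ → ℕ} (h : HasIntersectionNumbers C b c)
    (h' : HasIntersectionNumbers C b' c') {l : ℕ} (hl : ∃ x, distToCode C x = l) :
    b l = b' l ∧ c l = c' l :=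
  let ⟨x, hx⟩ := hl
  ⟨(h l x hx).1.symm.trans (h' l x hx).1, (h l x hx).2.symm.trans (h' l x hx).2⟩

theorem minDist_eq_of_forall_le [AddGroup β] {C : AddSubgroup (ι → β)} {d : ℕ}
    (hc : ∃ c ∈ C, c ≠ 0 ∧ hammingNorm c ≤ d) (hd : ∀ c ∈ C, c ≠ 0 → d ≤ hammingNorm c) :
    minDist (C : Set (ι → β)) = d := by
  obtain ⟨c, hc, hc0, hcd⟩ := hc
  have hmem : hammingNorm c ∈ {d | ∃ x ∈ (C : Set (ι → β)), ∃ y ∈ (C : Set (ι → β)),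
      x ≠ y ∧ hammingDist x y = d} :=
    ⟨c, hc, 0, C.zero_mem, hc0, hammingDist_zero_right c⟩
  refine le_antisymm ((Nat.sInf_le hmem).trans hcd) (le_csInf ⟨_, hmem⟩ ?_)
  rintro _ ⟨x, hx, y, hy, hxy, rfl⟩
  rw [hammingDist_eq_hammingNorm_sub]
  exact hd _ (C.sub_mem hx hy) (sub_ne_zero.2 hxy)

end Codes

section DifferenceMatrixCode

variable {K V : Type*} [Field K] [AddCommGroup V] [Module K V] [Fintype V]

variable (K V) in
def syndrome : (V → K) →ₗ[K] K × V := Fintype.linearCombination K fun v => ((1 : K), v)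

variable (K V) in
def differenceMatrixCode : Submodule K (V → K) := LinearMap.ker (syndrome K V)

theorem syndrome_apply (x : V → K) : syndrome K V x = (∑ v, x v, ∑ v, x v • v) := by
  ext <;> simp [syndrome, Fintype.linearCombination_apply, Prod.fst_sum, Prod.snd_sum]

theorem mem_differenceMatrixCode {x : V → K} :
    x ∈ differenceMatrixCode K V ↔ syndrome K V x = 0 :=
  LinearMap.mem_ker

theorem isAntipodal_dualSet_differenceMatrixCode [DecidableEq K] :
    IsAntipodal (dualSet (differenceMatrixCode K V : Set (V → K))) := by
  refine ⟨fun _ => 1, fun x hx => ?_, ?_⟩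
  · simpa [syndrome_apply] using congrArg Prod.fst (mem_differenceMatrixCode.1 hx)
  · simp [hammingNorm]

variable [DecidableEq V]

theorem syndrome_single (v : V) (a : K) : syndrome K V (Pi.single v a) = (a, a • v) := by
  simp [syndrome, Fintype.linearCombination_apply_single]

end DifferenceMatrixCode

section SyndromeWeight

variable {K V : Type*} [Zero K] [Zero V] [DecidableEq K] [DecidableEq V]

/-- The least weight of a vector with syndrome `s`, see `distToCode_differenceMatrixCode`. -/
def syndromeWeight (s : K × V) : ℕ := if s = 0 then 0 else if s.1 = 0 then 2 else 1

theorem syndromeWeight_le_two (s : K × V) : syndromeWeight s ≤ 2 := by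
  unfold syndromeWeight; split_ifs <;> omega

theorem syndromeWeight_eq_zero_iff {s : K × V} : syndromeWeight s = 0 ↔ s = 0 := by
  unfold syndromeWeight; split_ifs <;> simp_all

theorem syndromeWeight_eq_one_iff {s : K × V} : syndromeWeight s = 1 ↔ s.1 ≠ 0 := by
  unfold syndromeWeight; split_ifs <;> simp_all

theorem syndromeWeight_eq_two_iff {s : K × V} : syndromeWeight s = 2 ↔ s.1 = 0 ∧ s.2 ≠ 0 := by
  unfold syndromeWeight; split_ifs <;> simp_all [Prod.ext_iff]

end SyndromeWeight

section SyndromeWeightAdd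

variable {K V : Type*} [Field K] [AddCommGroup V] [Module K V]

theorem neg_smul_eq_neg_iff_eq_inv_smul {σ : K} (hσ : σ ≠ 0) {τ v : V} :
    (-σ) • v = -τ ↔ v = σ⁻¹ • τ := by
  rw [neg_smul, neg_inj, eq_inv_smul_iff₀ hσ]

variable [DecidableEq K] [DecidableEq V]

theorem syndromeWeight_add_of_fst_eq_zero {s : K × V} (hs : s.1 = 0) {a : K} (ha : a ≠ 0)
    (v : V) : syndromeWeight (s + (a, a • v)) = 1 :=
  syndromeWeight_eq_one_iff.2 (by simpa [hs] using ha)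

theorem syndromeWeight_add_eq_zero_iff {s : K × V} (hs : s.1 ≠ 0) {a : K} {v : V} :
    syndromeWeight (s + (a, a • v)) = 0 ↔ v = s.1⁻¹ • s.2 ∧ a = -s.1 := by
  rw [syndromeWeight_eq_zero_iff, Prod.ext_iff]
  simp only [Prod.fst_add, Prod.snd_add, Prod.fst_zero, Prod.snd_zero, add_eq_zero_iff_eq_neg']
  rw [and_comm]
  exact and_congr_left fun ha => by subst ha; exact neg_smul_eq_neg_iff_eq_inv_smul hs

theorem syndromeWeight_add_eq_two_iff {s : K × V} (hs : s.1 ≠ 0) {a : K} {v : V} :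
    syndromeWeight (s + (a, a • v)) = 2 ↔ v ≠ s.1⁻¹ • s.2 ∧ a = -s.1 := by
  simp only [syndromeWeight_eq_two_iff, Prod.fst_add, Prod.snd_add, ne_eq, add_eq_zero_iff_eq_neg']
  rw [and_comm]
  exact and_congr_left fun ha => by subst ha; exact (neg_smul_eq_neg_iff_eq_inv_smul hs).not

end SyndromeWeightAdd

section DifferenceMatrixCode

variable {K V : Type*} [Field K] [AddCommGroup V] [Module K V] [Fintype V] [DecidableEq V]
  [DecidableEq K]

theorem exists_syndrome_eq_and_hammingNorm_le (s : K × V) :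
    ∃ y, syndrome K V y = s ∧ hammingNorm y ≤ syndromeWeight s := by
  unfold syndromeWeight
  split_ifs with hs hs₁
  · exact ⟨0, by rw [map_zero, hs], by simp⟩
  · refine ⟨Pi.single s.2 1 - Pi.single 0 1, ?_, ?_⟩
    · rw [map_sub, syndrome_single, syndrome_single]
      ext <;> simp [hs₁]
    · exact (hammingNorm_sub_le _ _).trans (add_le_add (hammingNorm_single_le _ _)
        (hammingNorm_single_le _ _))
  · refine ⟨Pi.single (s.1⁻¹ • s.2) s.1, ?_, (hammingNorm_single hs₁).le⟩
    rw [syndrome_single, smul_smul, mul_inv_cancel₀ hs₁, one_smul]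

theorem syndrome_surjective : Function.Surjective (syndrome K V) :=
  fun s => (exists_syndrome_eq_and_hammingNorm_le s).imp fun _ => And.left

theorem syndromeWeight_syndrome_le (y : V → K) :
    syndromeWeight (syndrome K V y) ≤ hammingNorm y := by
  rcases (by omega : hammingNorm y = 0 ∨ hammingNorm y = 1 ∨ 2 ≤ hammingNorm y) with h | h | h
  · rw [hammingNorm_eq_zero.1 h, map_zero, syndromeWeight_eq_zero_iff.2 rfl]
    exact Nat.zero_le _
  · obtain ⟨v, a, ha, rfl⟩ := hammingNorm_eq_one_iff.1 h
    rw [h, syndrome_single, syndromeWeight_eq_one_iff.2 ha]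
  · exact (syndromeWeight_le_two _).trans h

theorem distToCode_differenceMatrixCode (x : V → K) :
    distToCode (differenceMatrixCode K V : Set (V → K)) x = syndromeWeight (syndrome K V x) := by
  refine distToCode_eq_of_forall_le ?_ fun c hc => ?_
  · obtain ⟨y, hy, hyw⟩ := exists_syndrome_eq_and_hammingNorm_le (syndrome K V x)
    refine ⟨x - y, mem_differenceMatrixCode.2 (by rw [map_sub, hy, sub_self]), ?_⟩
    rwa [hammingDist_eq_hammingNorm_sub, sub_sub_cancel]
  · rw [hammingDist_eq_hammingNorm_sub]
    have hc : syndrome K V c = 0 := mem_differenceMatrixCode.1 hc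
    simpa [hc] using syndromeWeight_syndrome_le (x - c)

theorem finrank_differenceMatrixCode :
    Module.finrank K (differenceMatrixCode K V) = Fintype.card V - Module.finrank K V - 1 := by
  have := LinearMap.finrank_range_add_finrank_ker (syndrome K V)
  rw [LinearMap.range_eq_top.2 syndrome_surjective, finrank_top, Module.finrank_prod,
    Module.finrank_self, Module.finrank_fintype_fun_eq_card] at this
  rw [differenceMatrixCode]
  omega

theorem syndrome_injOn : Set.InjOn (syndrome K V) {y | hammingNorm y ≤ 1} := by
  intro y hy z hz h
  obtain ⟨v, a, rfl⟩ := hammingNorm_le_one_iff.1 hy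
  obtain ⟨w, b, rfl⟩ := hammingNorm_le_one_iff.1 hz
  rw [syndrome_single, syndrome_single, Prod.mk.injEq] at h
  obtain ⟨rfl, h⟩ := h
  rcases eq_or_ne a 0 with rfl | ha
  · simp
  · rw [smul_right_injective V ha h]

theorem three_le_hammingNorm_of_mem {c : V → K} (hc : c ∈ differenceMatrixCode K V)
    (hc₀ : c ≠ 0) : 3 ≤ hammingNorm c := by
  obtain ⟨v, hv⟩ : ∃ v, c v ≠ 0 := Function.ne_iff.1 hc₀
  by_contra! hlt
  have hnorm := hammingNorm_sub_single_self_add_one hv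
  have hsyn : syndrome K V (c - Pi.single v (c v)) = syndrome K V (Pi.single v (-c v)) := by
    rw [map_sub, mem_differenceMatrixCode.1 hc, zero_sub, Pi.single_neg, map_neg]
  have := congrFun (syndrome_injOn (show hammingNorm _ ≤ 1 by omega)
    (hammingNorm_single_le v _) hsyn) v
  simp [hv] at this

theorem exists_mem_differenceMatrixCode_hammingNorm_le_three [Nontrivial V] [Fintype K]
    (hK : 3 ≤ Fintype.card K) :
    ∃ c ∈ differenceMatrixCode K V, c ≠ 0 ∧ hammingNorm c ≤ 3 := by
  obtain ⟨t, ht⟩ := exists_ne (0 : V)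
  obtain ⟨l, -, hl⟩ := Finset.exists_mem_notMem_of_card_lt_card (s := ({0, 1} : Finset K))
    (t := Finset.univ) (by rw [Finset.card_pair zero_ne_one, Finset.card_univ]; omega)
  simp only [Finset.mem_insert, Finset.mem_singleton, not_or] at hl
  have hlt : l • t ≠ t := fun h => hl.2 (smul_left_injective K ht (by simpa using h))
  have hlt₀ : l • t ≠ 0 := smul_ne_zero hl.1 ht
  refine ⟨Pi.single (l • t) 1 - Pi.single t l - Pi.single 0 (1 - l), ?_, ?_, ?_⟩
  · rw [mem_differenceMatrixCode, map_sub, map_sub, syndrome_single, syndrome_single,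
      syndrome_single]
    ext <;> simp
  · intro h
    simpa [hlt, hlt₀] using congrFun h (l • t)
  · have h₁ := hammingNorm_sub_le (Pi.single (l • t) 1 - Pi.single t l) (Pi.single 0 (1 - l))
    have h₂ := hammingNorm_sub_le (Pi.single (l • t) (1 : K)) (Pi.single t l)
    have := hammingNorm_single_le (l • t) (1 : K)
    have := hammingNorm_single_le t l
    have := hammingNorm_single_le (0 : V) (1 - l)
    omega

theorem minDist_differenceMatrixCode [Nontrivial V] [Fintype K] (hK : 3 ≤ Fintype.card K) :
    minDist (differenceMatrixCode K V : Set (V → K)) = 3 :=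
  minDist_eq_of_forall_le (C := (differenceMatrixCode K V).toAddSubgroup)
    (exists_mem_differenceMatrixCode_hammingNorm_le_three hK)
    fun _ => three_le_hammingNorm_of_mem

theorem exists_distToCode_differenceMatrixCode_eq [Nontrivial V] {l : ℕ} (hl : l ≤ 2) :
    ∃ x, distToCode (differenceMatrixCode K V : Set (V → K)) x = l := by
  obtain ⟨t, ht⟩ := exists_ne (0 : V)
  obtain ⟨s, hs⟩ : ∃ s : K × V, syndromeWeight s = l := by
    interval_cases l
    · exact ⟨0, syndromeWeight_eq_zero_iff.2 rfl⟩
    · exact ⟨(1, 0), syndromeWeight_eq_one_iff.2 one_ne_zero⟩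
    · exact ⟨(0, t), syndromeWeight_eq_two_iff.2 ⟨rfl, ht⟩⟩
  obtain ⟨x, rfl⟩ := syndrome_surjective s
  exact ⟨x, (distToCode_differenceMatrixCode x).trans hs⟩

theorem coveringRadius_differenceMatrixCode [Nontrivial V] :
    coveringRadius (differenceMatrixCode K V : Set (V → K)) = 2 :=
  coveringRadius_eq_of_forall_le
    (fun x => (distToCode_differenceMatrixCode x).trans_le (syndromeWeight_le_two _))
    (exists_distToCode_differenceMatrixCode_eq le_rfl)

theorem card_neighbours_differenceMatrixCode (x : V → K) (P : ℕ → Prop) :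
    Nat.card {y | hammingDist x y = 1 ∧
        P (distToCode (differenceMatrixCode K V : Set (V → K)) y)} =
      Nat.card {p : V × K // p.2 ≠ 0 ∧ P (syndromeWeight (syndrome K V x + (p.2, p.2 • p.1)))} := by
  simp only [card_neighbours, distToCode_differenceMatrixCode, map_add, syndrome_single]

theorem hasIntersectionNumbers_differenceMatrixCode [Fintype K] :
    HasIntersectionNumbers (differenceMatrixCode K V : Set (V → K))
      (fun | 0 => Fintype.card V * (Fintype.card K - 1) | 1 => Fintype.card V - 1 | _ => 0)
      (fun | 1 => 1 | 2 => Fintype.card V * (Fintype.card K - 1) | _ => 0) := by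
  intro l x hx
  rw [distToCode_differenceMatrixCode] at hx
  rw [card_neighbours_differenceMatrixCode x (· = l + 1),
    card_neighbours_differenceMatrixCode x (· + 1 = l)]
  generalize syndrome K V x = s at hx ⊢
  match l, hx with
  | 0, hx =>
    have hs : s.1 = 0 := by rw [syndromeWeight_eq_zero_iff.1 hx]; rfl
    refine ⟨?_, by simp⟩
    rw [← card_subtype_snd_ne 0]
    exact Nat.card_congr (Equiv.subtypeEquivRight fun p =>
      and_iff_left_of_imp fun ha => syndromeWeight_add_of_fst_eq_zero hs ha _)
  | 1, hx =>
    have hs : s.1 ≠ 0 := syndromeWeight_eq_one_iff.1 hx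
    have hne : -s.1 ≠ 0 := neg_ne_zero.2 hs
    simp only [Nat.reduceAdd, Nat.reduceEqDiff]
    constructor
    · rw [← card_subtype_fst_ne_snd_eq (s.1⁻¹ • s.2) (-s.1)]
      exact Nat.card_congr (Equiv.subtypeEquivRight fun p => by
        rw [syndromeWeight_add_eq_two_iff hs]
        exact and_iff_right_of_imp fun h => h.2 ▸ hne)
    · have : Nat.card {p : V × K // p = (s.1⁻¹ • s.2, -s.1)} = 1 := by simp
      rw [← this]
      exact Nat.card_congr (Equiv.subtypeEquivRight fun p => by
        rw [syndromeWeight_add_eq_zero_iff hs, Prod.ext_iff]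
        exact and_iff_right_of_imp fun h => h.2 ▸ hne)
  | 2, hx =>
    have hs : s.1 = 0 := (syndromeWeight_eq_two_iff.1 hx).1
    simp only [Nat.reduceAdd, Nat.reduceEqDiff]
    refine ⟨Nat.card_eq_zero.2 (.inl ⟨fun ⟨p, _, hp⟩ => ?_⟩), ?_⟩
    · have := syndromeWeight_le_two (s + (p.2, p.2 • p.1))
      omega
    · rw [← card_subtype_snd_ne 0]
      exact Nat.card_congr (Equiv.subtypeEquivRight fun p =>
        and_iff_left_of_imp fun ha => syndromeWeight_add_of_fst_eq_zero hs ha _)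
  | l + 3, hx => exact absurd hx (by have := syndromeWeight_le_two s; omega)

end DifferenceMatrixCode

/-- the difference-matrix code of length `n = q^m` (coordinates indexed by the
vectors of `𝔽_q^m`) is a `[n, n-m-1, 3]_q` code, completely regular with covering radius 2,
with antipodal dual and intersection array `(n(q-1), n-1; 1, n(q-1))`. -/
theorem difference_matrix_code
    {F : Type*} [Field F] [Fintype F] [DecidableEq F] {m : ℕ}
    (hq : 3 ≤ Fintype.card F) (hm : 1 ≤ m)
    (C : Submodule F ((Fin m → F) → F))
    (hC : ∀ x : (Fin m → F) → F, x ∈ C ↔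
      ((∑ v : Fin m → F, x v) = 0 ∧ ∀ j : Fin m, (∑ v : Fin m → F, x v * v j) = 0)) :
    Module.finrank F C = Fintype.card F ^ m - m - 1 ∧
    minDist (C : Set ((Fin m → F) → F)) = 3 ∧
    IsCompletelyRegular (C : Set ((Fin m → F) → F)) ∧
    coveringRadius (C : Set ((Fin m → F) → F)) = 2 ∧
    IsAntipodal (dualSet (C : Set ((Fin m → F) → F))) ∧
    ∀ b c : ℕ → ℕ, HasIntersectionNumbers (C : Set ((Fin m → F) → F)) b c →
      b 0 = Fintype.card F ^ m * (Fintype.card F - 1) ∧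
      b 1 = Fintype.card F ^ m - 1 ∧
      c 1 = 1 ∧
      c 2 = Fintype.card F ^ m * (Fintype.card F - 1) := by
  obtain rfl : C = differenceMatrixCode F (Fin m → F) := by
    ext x
    simp [hC, mem_differenceMatrixCode, syndrome_apply, Prod.ext_iff, funext_iff, Finset.sum_apply]
  have : Nonempty (Fin m) := Fin.pos_iff_nonempty.1 hm
  have hV : Fintype.card (Fin m → F) = Fintype.card F ^ m := by simp
  refine ⟨by rw [finrank_differenceMatrixCode, hV, Module.finrank_fin_fun],
    minDist_differenceMatrixCode hq, ⟨_, _, hasIntersectionNumbers_differenceMatrixCode⟩,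
    coveringRadius_differenceMatrixCode, isAntipodal_dualSet_differenceMatrixCode,
    fun b c h => ?_⟩
  have h₀ := hasIntersectionNumbers_differenceMatrixCode.unique h
    (exists_distToCode_differenceMatrixCode_eq (l := 0) zero_le_two)
  have h₁ := hasIntersectionNumbers_differenceMatrixCode.unique h
    (exists_distToCode_differenceMatrixCode_eq (l := 1) one_le_two)
  have h₂ := hasIntersectionNumbers_differenceMatrixCode.unique h
    (exists_distToCode_differenceMatrixCode_eq (l := 2) le_rfl)
  simp only [hV] at h₀ h₁ h₂
  exact ⟨h₀.1.symm, h₁.1.symm, h₁.2.symm, h₂.2.symm⟩
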